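/- arXiv:1912.06651 — 6 statements merged into one kernel-verified Lean document; each statement's English description precedes it below -/
import Mathlib

section
/- For all n ≥ 0, L^{(k)}_{n+k}(x,s) = F^{(k)}_{n+k}(x,s) + (k-1)·s·F^{(k)}_n(x,s). -/
/-- Generalized Fibonacci polynomials. -/
noncomputable def genFib (k n : ℕ) (x s : ℝ) : ℝ :=
  ∑ j ∈ Finset.range (n / k + 1),
    (Nat.choose (n - (k - 1) * j) j : ℝ) * s ^ j * x ^ (n - k * j)

/-- Generalized Lucas polynomials. -/
noncomputable def genLucas (k n : ℕ) (x s : ℝ) : ℝ :=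
  if n = 0 then (k : ℝ)
  else ∑ j ∈ Finset.range (n / k + 1),
    ((n : ℝ) / ((n - (k - 1) * j : ℕ) : ℝ)) *
      (Nat.choose (n - (k - 1) * j) j : ℝ) * s ^ j * x ^ (n - k * j)

/-! Each summand of `L_{n+k}` splits as `C(a, j) + (k - 1) C(a - 1, j - 1)`, where
`a = n + k - (k - 1) j`, because `(n + k) / a = 1 + (k - 1) j / a` and `j C(a, j) = a C(a - 1, j - 1)`.
The first parts add up to `F_{n+k}`; after the shift `j = i + 1` the second ones are the summands
of `(k - 1) s F_n`. -/

noncomputable def genFibTerm (k n : ℕ) (x s : ℝ) (j : ℕ) : ℝ :=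
  (Nat.choose (n - (k - 1) * j) j : ℝ) * s ^ j * x ^ (n - k * j)

noncomputable def genLucasTerm (k n : ℕ) (x s : ℝ) (j : ℕ) : ℝ :=
  (n : ℝ) / ((n - (k - 1) * j : ℕ) : ℝ) * genFibTerm k n x s j

lemma genFib_eq_sum (k n : ℕ) (x s : ℝ) :
    genFib k n x s = ∑ j ∈ Finset.range (n / k + 1), genFibTerm k n x s j :=
  rfl

lemma genLucas_eq_sum (k : ℕ) {n : ℕ} (hn : n ≠ 0) (x s : ℝ) :
    genLucas k n x s = ∑ j ∈ Finset.range (n / k + 1), genLucasTerm k n x s j := by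
  rw [genLucas, if_neg hn]
  refine Finset.sum_congr rfl fun j _ => ?_
  simp only [genLucasTerm, genFibTerm, mul_assoc]

lemma genLucasTerm_zero (k : ℕ) {n : ℕ} (hn : n ≠ 0) (x s : ℝ) :
    genLucasTerm k n x s 0 = genFibTerm k n x s 0 := by
  rw [genLucasTerm, mul_zero, Nat.sub_zero, div_self (Nat.cast_ne_zero.mpr hn), one_mul]

lemma add_mul_succ_div_mul_choose_succ (b i : ℕ) (c : ℝ) :
    (b + 1 + c * (i + 1)) / (b + 1) * ((b + 1).choose (i + 1) : ℝ) =
      ((b + 1).choose (i + 1) : ℝ) + c * (b.choose i : ℝ) := by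
  have h : ((b + 1).choose (i + 1) : ℝ) * (i + 1) = (b + 1) * b.choose i := by
    exact_mod_cast (Nat.add_one_mul_choose_eq b i).symm
  field_simp
  linear_combination c * h

lemma genLucasTerm_add_self_succ {k n i : ℕ} (hk : 1 ≤ k) (hi : i * k ≤ n) (x s : ℝ) :
    genLucasTerm k (n + k) x s (i + 1) =
      genFibTerm k (n + k) x s (i + 1) + ((k : ℝ) - 1) * s * genFibTerm k n x s i := by
  obtain ⟨c, rfl⟩ : ∃ c, k = c + 1 := ⟨k - 1, by omega⟩
  obtain ⟨b, rfl⟩ : ∃ b, n = b + c * i := ⟨n - c * i, by rw [Nat.sub_add_cancel]; nlinarith⟩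
  have hsucc : b + c * i + (c + 1) - (c + 1 - 1) * (i + 1) = b + 1 := by
    rw [Nat.add_sub_cancel, mul_add_one]; omega
  have hexp : b + c * i + (c + 1) - (c + 1) * (i + 1) = b + c * i - (c + 1) * i := by
    rw [mul_add_one]; omega
  have hbase : b + c * i - (c + 1 - 1) * i = b := by rw [Nat.add_sub_cancel]; omega
  have hcast : ((b + c * i + (c + 1) : ℕ) : ℝ) = b + 1 + c * (i + 1) := by push_cast; ring
  simp only [genLucasTerm, genFibTerm, hsucc, hexp, hbase, hcast]
  rw [← mul_assoc, ← mul_assoc, Nat.cast_add_one, add_mul_succ_div_mul_choose_succ]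
  push_cast
  ring

theorem genLucas_eq_genFib_add (k : ℕ) (hk : 1 ≤ k) (x s : ℝ) (n : ℕ) :
    genLucas k (n + k) x s =
      genFib k (n + k) x s + ((k : ℝ) - 1) * s * genFib k n x s := by
  have hnk : n + k ≠ 0 := by omega
  rw [genLucas_eq_sum k hnk, genFib_eq_sum, genFib_eq_sum, Nat.add_div_right n hk,
    Finset.sum_range_succ', Finset.sum_range_succ' (genFibTerm k (n + k) x s),
    genLucasTerm_zero k hnk, Finset.mul_sum]
  rw [Finset.sum_congr rfl fun i hi => genLucasTerm_add_self_succ hk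
    (Nat.mul_le_of_le_div k i n (Finset.mem_range_succ_iff.mp hi)) x s, Finset.sum_add_distrib]
  ring
end

section
/- For all n ≥ 0, L^{(k)}_n(x,s) equals the trace of the n-th power of the k×k companion-type matrix A_k(x,s). -/
/-- The `k × k` companion-type matrix `A_k(x,s)` with `a(i,i+1) = 1` for `0 ≤ i < k-1`,
`a(k-1,0) = s`, `a(k-1,k-1) = x`, and `0` otherwise. -/
noncomputable def Amat (k : ℕ) (x s : ℝ) : Matrix (Fin k) (Fin k) ℝ :=
  Matrix.of fun i j =>
    (if (i : ℕ) + 1 = (j : ℕ) then (1 : ℝ) else 0) +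
    (if (i : ℕ) = k - 1 ∧ (j : ℕ) = 0 then s else 0) +
    (if (i : ℕ) = k - 1 ∧ (j : ℕ) = k - 1 then x else 0)

/-!
For `A = Amat (k + 1) x s`, both `trace (A ^ n)` and `genLucas (k + 1) n x s` satisfy
`L (n + k + 1) = x * L (n + k) + s * L n`, and they agree for `n ≤ k`.

For the trace this is Cayley–Hamilton, read off from rows: row `0` of `A ^ n` is the basis vector
`e n` for `n ≤ k`, and row `i` of `A ^ m` is row `0` of `A ^ (i + m)`. The same two facts give
the diagonal of `A ^ n` for `1 ≤ n ≤ k`, which is `x ^ n` at the last index and `0` elsewhere.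

For the polynomials, write `n = (k + 1) j + r`; the coefficient `n / (n - k j) * C(n - k j, j)`
of `s ^ j * x ^ r` is the integer `C(j + r, r) + k * C(j + r - 1, r)`, and these integers obey
Pascal's rule in `(j, r)`, which is the recurrence coefficientwise.
-/

open Matrix

namespace Amat

variable {k : ℕ} {x s : ℝ}

theorem row_of_lt (i : Fin (k + 1)) (hi : (i : ℕ) < k) :
    Amat (k + 1) x s i = Pi.single ⟨i + 1, by omega⟩ 1 := by
  ext j
  simp only [Amat, of_apply, Pi.single_apply, Fin.ext_iff, Nat.add_sub_cancel]
  split_ifs <;> first | omega | simp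

theorem row_last :
    Amat (k + 1) x s (Fin.last k) = s • Pi.single 0 1 + x • Pi.single (Fin.last k) 1 := by
  ext j
  simp only [Amat, of_apply, Pi.single_apply, Fin.ext_iff, Nat.add_sub_cancel, Fin.val_last,
    Fin.val_zero, Pi.add_apply, Pi.smul_apply, smul_eq_mul, true_and]
  split_ifs <;> first | omega | simp

theorem pow_row_zero {n : ℕ} (hn : n ≤ k) :
    (Amat (k + 1) x s ^ n) 0 = Pi.single ⟨n, by omega⟩ 1 := by
  induction n with
  | zero => ext j; simp [one_eq_pi_single]
  | succ n ih =>
    rw [pow_succ, mul_apply_eq_vecMul, ih (by omega), single_one_vecMul, row,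
      row_of_lt _ (by simp; omega)]

theorem pow_row (m : ℕ) (i : Fin (k + 1)) :
    (Amat (k + 1) x s ^ m) i = (Amat (k + 1) x s ^ (i + m)) 0 := by
  rw [pow_add, mul_apply_eq_vecMul, pow_row_zero i.is_le, single_one_vecMul]
  rfl

/-- Cayley–Hamilton for `Amat`, whose characteristic polynomial is `t^(k+1) - x t^k - s`. -/
theorem pow_succ_self :
    Amat (k + 1) x s ^ (k + 1) = x • Amat (k + 1) x s ^ k + s • 1 := by
  funext i
  have hlast : (Amat (k + 1) x s ^ (k + 1)) 0 = Amat (k + 1) x s (Fin.last k) := by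
    rw [pow_succ, mul_apply_eq_vecMul, pow_row_zero le_rfl, single_one_vecMul]; rfl
  have hi : (Amat (k + 1) x s ^ (k + 1)) i
      = (Amat (k + 1) x s ^ (k + 1) * Amat (k + 1) x s ^ (i : ℕ)) 0 := by
    rw [pow_row, ← pow_add, Nat.add_comm (i : ℕ)]
  rw [hi, mul_apply_eq_vecMul, hlast, row_last, add_vecMul, smul_vecMul, smul_vecMul,
    single_one_vecMul, single_one_vecMul, row, pow_row_zero i.is_le, pow_row _ (Fin.last k),
    Fin.val_last, Nat.add_comm k (i : ℕ), ← pow_row k i]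
  ext j
  simp [one_eq_pi_single, add_comm]

theorem pow_add_succ (m : ℕ) :
    Amat (k + 1) x s ^ (m + k + 1)
      = x • Amat (k + 1) x s ^ (m + k) + s • Amat (k + 1) x s ^ m := by
  rw [add_assoc, pow_add, pow_succ_self, Matrix.mul_add, Matrix.mul_smul, Matrix.mul_smul,
    ← pow_add, Matrix.mul_one]

theorem trace_pow_add_succ (m : ℕ) :
    trace (Amat (k + 1) x s ^ (m + k + 1))
      = x * trace (Amat (k + 1) x s ^ (m + k)) + s * trace (Amat (k + 1) x s ^ m) := by
  rw [pow_add_succ, trace_add, trace_smul, trace_smul, smul_eq_mul, smul_eq_mul]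

theorem pow_succ_apply_self {n : ℕ} (hn : n < k) (i : Fin (k + 1)) :
    (Amat (k + 1) x s ^ (n + 1)) i i
      = if k ≤ i + n then x * (Amat (k + 1) x s ^ n) i i else 0 := by
  rw [pow_row]
  split_ifs with h
  · obtain ⟨m, hm⟩ := Nat.exists_eq_add_of_le' h
    rw [← add_assoc, hm, pow_add_succ, ← hm, Matrix.add_apply, Matrix.smul_apply,
      Matrix.smul_apply, ← pow_row, pow_row_zero (by omega), Pi.single_apply,
      if_neg (by simp [Fin.ext_iff]; omega), smul_eq_mul, smul_zero, add_zero]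
  · rw [pow_row_zero (by omega), Pi.single_apply, if_neg (by simp [Fin.ext_iff])]

theorem pow_apply_self {n : ℕ} (hn₀ : 1 ≤ n) (hn : n ≤ k) (i : Fin (k + 1)) :
    (Amat (k + 1) x s ^ n) i i = if i = Fin.last k then x ^ n else 0 := by
  induction n, hn₀ using Nat.le_induction with
  | base =>
    have hi : k ≤ (i : ℕ) ↔ i = Fin.last k := by
      rw [Fin.ext_iff, Fin.val_last]; have := i.is_le; omega
    simpa [hi] using pow_succ_apply_self (x := x) (s := s) hn i
  | succ n hn₁ ih =>
    rw [pow_succ_apply_self (by omega), ih (by omega)]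
    by_cases h : i = Fin.last k
    · simp [h, pow_succ, mul_comm]
    · simp [h]

theorem trace_pow_of_le {n : ℕ} (hn₀ : 1 ≤ n) (hn : n ≤ k) :
    trace (Amat (k + 1) x s ^ n) = x ^ n := by
  simp [trace, pow_apply_self hn₀ hn]

end Amat

open Finset

theorem mul_choose_add_eq (j r : ℕ) : j * (j + r).choose r = (j + r) * (j + r - 1).choose r := by
  cases j with
  | zero => cases r <;> simp
  | succ j =>
    rw [← Nat.choose_symm_add, Nat.add_right_comm j 1 r, Nat.add_sub_cancel,
      ← Nat.choose_symm_add (a := j), Nat.add_one_mul_choose_eq, mul_comm]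

/-- The coefficient of `s ^ j * x ^ r` in `genLucas (k + 1) ((k + 1) * j + r)`. At `j = r = 0`
the truncated subtraction makes it `k + 1`, in agreement with `genLucas (k + 1) 0`. -/
def lucasCoeff (k j r : ℕ) : ℕ := (j + r).choose r + k * (j + r - 1).choose r

theorem lucasCoeff_zero_right (k j : ℕ) : lucasCoeff k j 0 = k + 1 := by
  simp [lucasCoeff, add_comm]

theorem lucasCoeff_zero_succ (k r : ℕ) : lucasCoeff k 0 (r + 1) = 1 := by
  simp [lucasCoeff]

theorem lucasCoeff_succ_succ (k j r : ℕ) :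
    lucasCoeff k (j + 1) (r + 1) = lucasCoeff k (j + 1) r + lucasCoeff k j (r + 1) := by
  simp only [lucasCoeff, show j + 1 + (r + 1) = j + r + 1 + 1 by ring,
    show j + 1 + r = j + r + 1 by ring, show j + (r + 1) = j + r + 1 by ring, Nat.add_sub_cancel,
    Nat.choose_succ_succ' (j + r + 1), Nat.choose_succ_succ' (j + r)]
  ring

theorem lucasCoeff_eq_div_mul_choose (k j r : ℕ) (h : 0 < j + r) :
    (lucasCoeff k j r : ℝ)
      = ((k + 1) * j + r : ℕ) / ((j + r : ℕ) : ℝ) * (j + r).choose j := by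
  have hjr : ((j + r : ℕ) : ℝ) ≠ 0 := by positivity
  rw [div_mul_eq_mul_div, eq_div_iff hjr, Nat.choose_symm_add]
  have key : (j : ℝ) * (j + r).choose r = (j + r) * (j + r - 1).choose r := by
    exact_mod_cast mul_choose_add_eq j r
  simp only [lucasCoeff]
  push_cast
  linear_combination (-(k : ℝ)) * key

/-- The `j`-th summand of `genLucas (k + 1) n`, extended by `0` past `j = n / (k + 1)` so that
the sum may run over any long enough range. -/
noncomputable def lucasTerm (k : ℕ) (x s : ℝ) (n j : ℕ) : ℝ :=
  if (k + 1) * j ≤ n then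
    (lucasCoeff k j (n - (k + 1) * j) : ℝ) * s ^ j * x ^ (n - (k + 1) * j)
  else 0

theorem genLucas_eq_sum_lucasTerm (k : ℕ) (x s : ℝ) {n R : ℕ} (hR : n / (k + 1) < R) :
    genLucas (k + 1) n x s = ∑ j ∈ range R, lucasTerm k x s n j := by
  have hmem : ∀ j, j ∈ range (n / (k + 1) + 1) ↔ (k + 1) * j ≤ n := fun j => by
    rw [mem_range, Nat.lt_succ_iff, Nat.le_div_iff_mul_le (by omega), mul_comm]
  rw [← sum_subset (f := lucasTerm k x s n) (range_subset_range.2 hR)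
    fun j _ hj => if_neg ((hmem j).not.1 hj)]
  unfold genLucas
  split_ifs with hn
  · simp [hn, lucasTerm, lucasCoeff_zero_right]
  refine sum_congr rfl fun j hj => ?_
  obtain ⟨r, hr⟩ := Nat.exists_eq_add_of_le ((hmem j).1 hj)
  rw [lucasTerm, if_pos ((hmem j).1 hj), hr, Nat.add_sub_cancel_left, Nat.add_sub_cancel,
    lucasCoeff_eq_div_mul_choose _ _ _ (by rcases j with _ | j <;> omega)]
  rw [show (k + 1) * j + r - k * j = j + r by rw [add_mul, one_mul]; omega]

theorem lucasTerm_add_succ_zero (k : ℕ) (x s : ℝ) (n : ℕ) :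
    lucasTerm k x s (n + k + 1) 0 = x * lucasTerm k x s (n + k) 0 := by
  obtain h | ⟨m, hm⟩ : n + k = 0 ∨ ∃ m, n + k = m + 1 := by cases n + k <;> simp
  · obtain ⟨rfl, rfl⟩ : n = 0 ∧ k = 0 := by omega
    simp [lucasTerm, lucasCoeff]
  · simp [lucasTerm, hm, lucasCoeff_zero_succ, pow_succ]
    ring

theorem lucasTerm_add_succ_succ (k : ℕ) (x s : ℝ) (n j : ℕ) :
    lucasTerm k x s (n + k + 1) (j + 1)
      = x * lucasTerm k x s (n + k) (j + 1) + s * lucasTerm k x s n j := by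
  have hmul : (k + 1) * (j + 1) = (k + 1) * j + k + 1 := by ring
  by_cases h : (k + 1) * j ≤ n
  · obtain ⟨r, rfl⟩ := Nat.exists_eq_add_of_le h
    simp only [lucasTerm, hmul, if_pos h]
    rcases r with _ | r
    · simp [lucasCoeff_zero_right, pow_succ]
      ring
    · rw [if_pos (by omega), if_pos (by omega), Nat.add_sub_cancel_left,
        show (k + 1) * j + (r + 1) + k + 1 - ((k + 1) * j + k + 1) = r + 1 by omega,
        show (k + 1) * j + (r + 1) + k - ((k + 1) * j + k + 1) = r by omega,
        lucasCoeff_succ_succ]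
      push_cast
      ring
  · simp only [lucasTerm, hmul, if_neg h]
    rw [if_neg (by omega), if_neg (by omega)]
    ring

theorem genLucas_add_succ (k : ℕ) (x s : ℝ) (n : ℕ) :
    genLucas (k + 1) (n + k + 1) x s
      = x * genLucas (k + 1) (n + k) x s + s * genLucas (k + 1) n x s := by
  have hR {m N : ℕ} (hm : m ≤ N) : m / (k + 1) < N + 1 :=
    Nat.lt_succ_of_le ((Nat.div_le_self _ _).trans hm)
  rw [genLucas_eq_sum_lucasTerm k x s (hR le_rfl),
    genLucas_eq_sum_lucasTerm k x s (hR (by omega : n + k ≤ n + k + 1)),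
    genLucas_eq_sum_lucasTerm k x s (hR (by omega : n ≤ n + k)),
    sum_range_succ' (lucasTerm k x s _), sum_range_succ' (lucasTerm k x s (n + k)),
    sum_congr rfl fun j _ => lucasTerm_add_succ_succ k x s n j, sum_add_distrib,
    lucasTerm_add_succ_zero, mul_add, mul_sum, mul_sum]
  ring

theorem genLucas_of_le (k : ℕ) (x s : ℝ) {n : ℕ} (hn₀ : 1 ≤ n) (hn : n ≤ k) :
    genLucas (k + 1) n x s = x ^ n := by
  have hn' : (n : ℝ) ≠ 0 := by positivity
  simp [genLucas, Nat.div_eq_of_lt (Nat.lt_succ_of_le hn), hn', show n ≠ 0 by omega]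

theorem genLucas_eq_trace_pow (k : ℕ) (hk : 1 ≤ k) (x s : ℝ) (n : ℕ) :
    Matrix.trace (Amat k x s ^ n) = genLucas k n x s := by
  obtain ⟨k, rfl⟩ := Nat.exists_eq_add_of_le' hk
  induction n using Nat.strong_induction_on with
  | _ n ih =>
    rcases Nat.lt_or_ge k n with hkn | hnk
    · obtain ⟨m, rfl⟩ := Nat.exists_eq_add_of_lt hkn
      rw [add_comm k m, Amat.trace_pow_add_succ, genLucas_add_succ, ih _ (by omega),
        ih _ (by omega)]
    · rcases n with _ | n
      · simp [genLucas]
      · rw [Amat.trace_pow_of_le (by omega) hnk, genLucas_of_le k x s (by omega) hnk]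
end

section
/- For n ≥ 1, det((C(i-1,j)·x² + C(i+1,j+1))_{i,j=0}^{n-1}) = F_{2n}(x), where F_m(x) is the m-th Fibonacci polynomial. -/
/-- Generalized binomial coefficient `C(a,b)` for integer `a`, with `C(a,b) = 0` for `b < 0`. -/
noncomputable def gchoose (a b : ℤ) : ℤ :=
  if 0 ≤ b then Ring.choose a b.toNat else 0

/-- Fibonacci polynomials `F_m(x) = ∑_{k=0}^{⌊m/2⌋} C(m-k,k) x^{m-2k}`. -/
noncomputable def fibP (m : ℕ) (x : ℝ) : ℝ :=
  ∑ k ∈ Finset.range (m / 2 + 1), (Nat.choose (m - k) k : ℝ) * x ^ (m - 2 * k)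

/-- Lucas polynomials `L_m(x) = ∑_{k=0}^{⌊m/2⌋} (m/(m-k)) C(m-k,k) x^{m-2k}`, `L_0 = 2`. -/
noncomputable def lucasP (m : ℕ) (x : ℝ) : ℝ :=
  if m = 0 then 2
  else ∑ k ∈ Finset.range (m / 2 + 1),
    ((m : ℝ) / ((m - k : ℕ) : ℝ)) * (Nat.choose (m - k) k : ℝ) * x ^ (m - 2 * k)

set_option linter.unreachableTactic false
set_option linter.unusedTactic false

open Matrix Finset

namespace DF

lemma gchoose_natCast (a b : ℕ) : gchoose (a : ℤ) (b : ℤ) = (Nat.choose a b : ℤ) := by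
  unfold gchoose
  rw [if_pos (Int.natCast_nonneg b), Int.toNat_natCast]
  exact Ring.choose_natCast a b

lemma gchoose_neg_one (b : ℕ) : gchoose (-1) (b : ℤ) = (-1)^b := by
  unfold gchoose
  rw [if_pos (Int.natCast_nonneg b), Int.toNat_natCast]
  show Ring.multichoose ((-1 : ℤ) - b + 1) b = (-1)^b
  have h : (-1 : ℤ) - b + 1 = -(b : ℤ) := by ring
  rw [h]
  exact Ring.multichoose_neg_self b



noncomputable def G (x : ℝ) (m : ℕ) : ℝ :=
  ∑ j ∈ range (m+1), (Nat.choose (m+j) (2*j) : ℝ) * (x^2)^j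

lemma G_zero (x : ℝ) : G x 0 = 1 := by simp [G]

lemma G_one (x : ℝ) : G x 1 = x^2 + 1 := by
  simp [G, Finset.sum_range_succ]
  ring

lemma G_pos (x : ℝ) (m : ℕ) : 0 < G x m := by
  refine Finset.sum_pos' (fun j _ => by positivity) ⟨0, by simp, ?_⟩
  simp

lemma pascal3 (m j : ℕ) :
    (m+j+3).choose (2*j+2) + (m+j+1).choose (2*j+2)
      = 2 * ((m+j+2).choose (2*j+2)) + (m+j+1).choose (2*j) := by
  have p1 : (m+j+3).choose (2*j+2) = (m+j+2).choose (2*j+1) + (m+j+2).choose (2*j+2) :=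
    Nat.choose_succ_succ (m+j+2) (2*j+1)
  have p2 : (m+j+2).choose (2*j+1) = (m+j+1).choose (2*j) + (m+j+1).choose (2*j+1) :=
    Nat.choose_succ_succ (m+j+1) (2*j)
  have p3 : (m+j+2).choose (2*j+2) = (m+j+1).choose (2*j+1) + (m+j+1).choose (2*j+2) :=
    Nat.choose_succ_succ (m+j+1) (2*j+1)
  omega

lemma G_rec (x : ℝ) (m : ℕ) : G x (m+2) = (x^2+2) * G x (m+1) - G x m := by
  have hG2 : G x (m+2) = ∑ j ∈ range (m+3), (Nat.choose (m+2+j) (2*j) : ℝ) * (x^2)^j := rfl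
  have hA1 : G x (m+1) = ∑ j ∈ range (m+2), (Nat.choose (m+1+j) (2*j) : ℝ) * (x^2)^j := rfl
  have hG1 : G x (m+1) = ∑ j ∈ range (m+3), (Nat.choose (m+1+j) (2*j) : ℝ) * (x^2)^j := by
    rw [hA1, Finset.sum_range_succ (n := m+2)]
    have : (m+1+(m+2)).choose (2*(m+2)) = 0 := Nat.choose_eq_zero_of_lt (by omega)
    simp [this]
  have hG0 : G x m = ∑ j ∈ range (m+3), (Nat.choose (m+j) (2*j) : ℝ) * (x^2)^j := by
    rw [show G x m = ∑ j ∈ range (m+1), (Nat.choose (m+j) (2*j) : ℝ) * (x^2)^j from rfl,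
      Finset.sum_range_succ (n := m+2), Finset.sum_range_succ (n := m+1)]
    have h1 : (m+(m+1)).choose (2*(m+1)) = 0 := Nat.choose_eq_zero_of_lt (by omega)
    have h2 : (m+(m+2)).choose (2*(m+2)) = 0 := Nat.choose_eq_zero_of_lt (by omega)
    simp [h1, h2]
  have hS1 : (∑ j ∈ range (m+2), (Nat.choose (m+1+j) (2*j) : ℝ) * (x^2)^j)
      = ∑ j ∈ range (m+3), (Nat.choose (m+1+j) (2*j) : ℝ) * (x^2)^j := by
    rw [← hA1, hG1]
  have expand : (∑ j ∈ range (m+3), (Nat.choose (m+2+j) (2*j) : ℝ) * (x^2)^j)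
      + (∑ j ∈ range (m+3), (Nat.choose (m+j) (2*j) : ℝ) * (x^2)^j)
      - 2 * (∑ j ∈ range (m+3), (Nat.choose (m+1+j) (2*j) : ℝ) * (x^2)^j)
      = ∑ j ∈ range (m+3),
          (((Nat.choose (m+2+j) (2*j) : ℝ) + (Nat.choose (m+j) (2*j) : ℝ)
            - 2 * (Nat.choose (m+1+j) (2*j) : ℝ)) * (x^2)^j) := by
    rw [Finset.mul_sum, ← Finset.sum_add_distrib, ← Finset.sum_sub_distrib]
    exact Finset.sum_congr rfl fun j _ => by ring
  have main : (∑ j ∈ range (m+3),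
          (((Nat.choose (m+2+j) (2*j) : ℝ) + (Nat.choose (m+j) (2*j) : ℝ)
            - 2 * (Nat.choose (m+1+j) (2*j) : ℝ)) * (x^2)^j))
      = x^2 * ∑ j ∈ range (m+2), (Nat.choose (m+1+j) (2*j) : ℝ) * (x^2)^j := by
    rw [Finset.sum_range_succ' _ (m+2), Finset.mul_sum]
    have h0 : (((Nat.choose (m+2+0) (2*0) : ℝ) + (Nat.choose (m+0) (2*0) : ℝ)
            - 2 * (Nat.choose (m+1+0) (2*0) : ℝ)) * (x^2)^0) = 0 := by norm_num
    rw [h0, add_zero]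
    refine Finset.sum_congr rfl fun j _ => ?_
    have hc : (Nat.choose (m+2+(j+1)) (2*(j+1)) : ℝ) + (Nat.choose (m+(j+1)) (2*(j+1)) : ℝ)
        - 2 * (Nat.choose (m+1+(j+1)) (2*(j+1)) : ℝ) = (Nat.choose (m+1+j) (2*j) : ℝ) := by
      have h := pascal3 m j
      have e1 : m+2+(j+1) = m+j+3 := by omega
      have e2 : m+(j+1) = m+j+1 := by omega
      have e3 : m+1+(j+1) = m+j+2 := by omega
      have e4 : m+1+j = m+j+1 := by omega
      have e5 : 2*(j+1) = 2*j+2 := by omega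
      rw [e1, e2, e3, e4, e5]
      have h2 := congrArg (Nat.cast : ℕ → ℝ) h
      push_cast at h2
      linarith
    rw [hc, pow_succ]
    ring
  rw [hG2, hG0, hA1]
  linear_combination expand + main - 2 * hS1

lemma fib_eq_G (x : ℝ) (m : ℕ) :
    (∑ k ∈ Finset.range (2*m / 2 + 1), (Nat.choose (2*m - k) k : ℝ) * x ^ (2*m - 2 * k))
      = G x m := by
  have h2 : 2*m/2 = m := by omega
  rw [h2, G]
  rw [← Finset.sum_range_reflect (fun k => (Nat.choose (2*m - k) k : ℝ) * x ^ (2*m - 2 * k)) (m+1)]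
  apply Finset.sum_congr rfl
  intro j hj
  simp only [Finset.mem_range] at hj
  have e0 : m + 1 - 1 - j = m - j := by omega
  have e1 : 2*m - (m - j) = m + j := by omega
  have e2 : 2*m - 2*(m-j) = 2*j := by omega
  rw [e0, e1, e2]
  have e3 : (m+j).choose (m - j) = (m+j).choose (2*j) := by
    have h4 : m - j = (m+j) - 2*j := by omega
    rw [h4, Nat.choose_symm (by omega)]
  rw [e3, pow_mul]


variable {n : ℕ} (x : ℝ)

noncomputable def mA (n : ℕ) : Matrix (Fin n) (Fin n) ℝ :=
  Matrix.of fun i j => (gchoose ((i : ℤ) - 1) (j : ℤ) : ℝ)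

noncomputable def mB (n : ℕ) : Matrix (Fin n) (Fin n) ℝ :=
  Matrix.of fun i j => (gchoose ((i : ℤ) + 1) ((j : ℤ) + 1) : ℝ)

noncomputable def mL (n : ℕ) : Matrix (Fin n) (Fin n) ℝ :=
  Matrix.of fun i j => if (j : ℕ) ≤ (i : ℕ) then 1 else 0

noncomputable def mDif (n : ℕ) : Matrix (Fin n) (Fin n) ℝ :=
  Matrix.of fun i j => if i = j then 1 else if (i : ℕ) = (j : ℕ) + 1 then -1 else 0

noncomputable def mD (n : ℕ) : Matrix (Fin n) (Fin n) ℝ :=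
  Matrix.diagonal fun i => (-1)^(i : ℕ)

lemma mA_zero (i j : Fin n) (hi : (i : ℕ) = 0) : mA n i j = (-1)^(j : ℕ) := by
  have h : (i : ℤ) - 1 = -1 := by
    have : ((i : ℕ) : ℤ) = 0 := by exact_mod_cast congrArg (Nat.cast : ℕ → ℤ) hi
    omega
  show (gchoose ((i : ℤ) - 1) (j : ℤ) : ℝ) = _
  rw [h]
  rw [show ((j : Fin n) : ℤ) = (((j : ℕ) : ℤ)) from rfl]
  rw [gchoose_neg_one]
  push_cast
  ring

lemma mA_succ (i j : Fin n) (p : ℕ) (hi : (i : ℕ) = p + 1) :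
    mA n i j = (Nat.choose p (j : ℕ) : ℝ) := by
  have h : (i : ℤ) - 1 = (p : ℤ) := by
    have : ((i : ℕ) : ℤ) = (p : ℤ) + 1 := by exact_mod_cast congrArg (Nat.cast : ℕ → ℤ) hi
    omega
  show (gchoose ((i : ℤ) - 1) (j : ℤ) : ℝ) = _
  rw [h, show ((j : Fin n) : ℤ) = (((j : ℕ) : ℤ)) from rfl, gchoose_natCast]
  push_cast
  ring

lemma mB_apply (i j : Fin n) : mB n i j = (Nat.choose ((i : ℕ) + 1) ((j : ℕ) + 1) : ℝ) := by
  show (gchoose ((i : ℤ) + 1) ((j : ℤ) + 1) : ℝ) = _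
  have h1 : (i : ℤ) + 1 = (((i : ℕ) + 1 : ℕ) : ℤ) := by push_cast; rfl
  have h2 : (j : ℤ) + 1 = (((j : ℕ) + 1 : ℕ) : ℤ) := by push_cast; rfl
  rw [h1, h2, gchoose_natCast]
  norm_num

lemma key1 : mDif n * mL n = 1 := by
  ext i j
  rw [Matrix.mul_apply]
  rcases hcase : (i : ℕ) with _ | m
  · rw [Finset.sum_eq_single_of_mem i (Finset.mem_univ i)]
    · have : mDif n i i = 1 := by simp [mDif]
      rw [this, one_mul]
      show (if (j : ℕ) ≤ (i : ℕ) then (1:ℝ) else 0) = (1 : Matrix (Fin n) (Fin n) ℝ) i j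
      simp only [Matrix.one_apply, Fin.ext_iff]
      split_ifs <;> first | rfl | omega
    · intro k _ hk
      have h1 : ¬ (i = k) := fun h => hk h.symm
      have h2 : ¬ ((i : ℕ) = (k : ℕ) + 1) := by omega
      have : mDif n i k = 0 := by simp [mDif, h1, h2]
      rw [this, zero_mul]
  · have hm : m < n := by have := i.isLt; omega
    set k0 : Fin n := ⟨m, hm⟩ with hk0
    rw [Finset.sum_eq_add_of_mem i k0 (Finset.mem_univ _) (Finset.mem_univ _)
        (by intro h; rw [Fin.ext_iff] at h; simp [hk0] at h; omega)]
    · have e1 : mDif n i i = 1 := by simp [mDif]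
      have e2 : mDif n i k0 = -1 := by
        have h1 : ¬ (i = k0) := by intro h; rw [Fin.ext_iff] at h; simp [hk0] at h; omega
        have h2 : (i : ℕ) = (k0 : ℕ) + 1 := by simp [hk0]; omega
        simp [mDif, h1, h2]
      rw [e1, e2, one_mul]
      show (if (j : ℕ) ≤ (i : ℕ) then (1:ℝ) else 0) + -1 * (if (j : ℕ) ≤ (k0 : ℕ) then (1:ℝ) else 0)
          = (1 : Matrix (Fin n) (Fin n) ℝ) i j
      simp only [Matrix.one_apply, Fin.ext_iff]
      split_ifs <;> first | (exfalso; have hk0v : (k0 : ℕ) = m := rfl; omega) | norm_num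
    · intro c _ hc
      obtain ⟨hc1, hc2⟩ := hc
      have h1 : ¬ (i = c) := fun h => hc1 h.symm
      have h2 : ¬ ((i : ℕ) = (c : ℕ) + 1) := by
        intro h
        apply hc2
        rw [Fin.ext_iff]
        show (c : ℕ) = m
        omega
      have : mDif n i c = 0 := by simp [mDif, h1, h2]
      rw [this, zero_mul]

lemma P1 (i j : ℕ) (N : ℕ) :
    (∑ k ∈ range N, (if j ≤ k then (-1:ℝ)^k * (Nat.choose (i+1) (k+1) : ℝ) else 0))
      = if j ≤ N then (-1:ℝ)^j * (Nat.choose i j : ℝ) - (-1:ℝ)^N * (Nat.choose i N : ℝ)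
        else 0 := by
  induction N with
  | zero =>
    simp only [Finset.sum_range_zero]
    split_ifs with h
    · have : j = 0 := by omega
      subst this; ring
    · rfl
  | succ N ih =>
    rw [Finset.sum_range_succ, ih]
    by_cases h1 : j ≤ N
    · rw [if_pos h1, if_pos h1, if_pos (by omega)]
      have pas : (Nat.choose (i+1) (N+1) : ℝ)
          = (Nat.choose i N : ℝ) + (Nat.choose i (N+1) : ℝ) := by
        have := Nat.choose_succ_succ i N
        exact_mod_cast congrArg (Nat.cast : ℕ → ℝ) this
      rw [pas, pow_succ]
      ring
    · by_cases h2 : j ≤ N + 1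
      · have hj : j = N + 1 := by omega
        rw [if_neg h1, if_neg h1, if_pos h2, hj]
        ring
      · rw [if_neg h1, if_neg h1, if_neg h2]
        ring

lemma key3 : mB n * mD n * mL n = mA n * mD n * (mDif n)ᵀ := by
  ext i j
  have hLHS : (mB n * mD n * mL n) i j = (-1:ℝ)^(j:ℕ) * (Nat.choose (i:ℕ) (j:ℕ) : ℝ) := by
    rw [Matrix.mul_apply]
    have hterm : ∀ k : Fin n, (mB n * mD n) i k * mL n k j
        = (if (j:ℕ) ≤ (k:ℕ) then (-1:ℝ)^(k:ℕ) * (Nat.choose ((i:ℕ)+1) ((k:ℕ)+1) : ℝ) else 0) := by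
      intro k
      show (mB n * mD n) i k * (if (j:ℕ) ≤ (k:ℕ) then (1:ℝ) else 0) = _
      rw [mD, Matrix.mul_diagonal, mB_apply]
      split_ifs <;> ring
    rw [Finset.sum_congr rfl (fun k _ => hterm k)]
    rw [Fin.sum_univ_eq_sum_range
      (fun k => if (j:ℕ) ≤ k then (-1:ℝ)^k * (Nat.choose ((i:ℕ)+1) (k+1) : ℝ) else 0) n]
    rw [P1 (i:ℕ) (j:ℕ) n, if_pos (le_of_lt j.isLt)]
    rw [Nat.choose_eq_zero_of_lt i.isLt]
    norm_num
  rw [hLHS, Matrix.mul_apply]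
  have hterm : ∀ k : Fin n, (mA n * mD n) i k * (mDif n)ᵀ k j
      = mA n i k * (-1:ℝ)^(k:ℕ) * mDif n j k := by
    intro k
    rw [mD, Matrix.mul_diagonal, Matrix.transpose_apply]
  rw [Finset.sum_congr rfl (fun k _ => hterm k)]
  rcases hj : (j : ℕ) with _ | q
  · -- j = 0 : single support k = j
    rw [Finset.sum_eq_single_of_mem j (Finset.mem_univ j)]
    · have e1 : mDif n j j = 1 := by simp [mDif]
      rw [e1, hj]
      rcases hi : (i : ℕ) with _ | p
      · rw [mA_zero i j hi, hj]; norm_num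
      · rw [mA_succ i j p hi, hj]; simp
    · intro k _ hk
      have h1 : ¬ (j = k) := fun h => hk h.symm
      have h2 : ¬ ((j : ℕ) = (k : ℕ) + 1) := by omega
      have : mDif n j k = 0 := by simp [mDif, h1, h2]
      rw [this, mul_zero]
  · -- j = q+1 : support {j, k0 = q}
    have hq : q < n := by have := j.isLt; omega
    set k0 : Fin n := ⟨q, hq⟩ with hk0
    rw [Finset.sum_eq_add_of_mem j k0 (Finset.mem_univ _) (Finset.mem_univ _)
        (by intro h; rw [Fin.ext_iff] at h; simp [hk0] at h; omega)]
    · have e1 : mDif n j j = 1 := by simp [mDif]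
      have e2 : mDif n j k0 = -1 := by
        have h1 : ¬ (j = k0) := by intro h; rw [Fin.ext_iff] at h; simp [hk0] at h; omega
        have h2 : (j : ℕ) = (k0 : ℕ) + 1 := by simp [hk0]; omega
        simp [mDif, h1, h2]
      have hk0v : (k0 : ℕ) = q := rfl
      rw [e1, e2, hk0v, hj]
      rcases hi : (i : ℕ) with _ | p
      · rw [mA_zero i j hi, mA_zero i k0 hi, hj, hk0v]
        rw [Nat.choose_eq_zero_of_lt (by omega)]
        rw [pow_succ]
        ring
      · rw [mA_succ i j p hi, mA_succ i k0 p hi, hj, hk0v]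
        have pas : (Nat.choose (p+1) (q+1) : ℝ)
            = (Nat.choose p q : ℝ) + (Nat.choose p (q+1) : ℝ) := by
          have := Nat.choose_succ_succ p q
          exact_mod_cast congrArg (Nat.cast : ℕ → ℝ) this
        rw [pas, pow_succ]
        ring
    · intro c _ hc
      obtain ⟨hc1, hc2⟩ := hc
      have h1 : ¬ (j = c) := fun h => hc1 h.symm
      have h2 : ¬ ((j : ℕ) = (c : ℕ) + 1) := by
        intro h
        apply hc2
        rw [Fin.ext_iff]
        show (c : ℕ) = q
        omega
      have : mDif n j c = 0 := by simp [mDif, h1, h2]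
      rw [this, mul_zero]


noncomputable def mLo (x : ℝ) (n : ℕ) : Matrix (Fin n) (Fin n) ℝ :=
  Matrix.of fun i j =>
    if i = j then 1 else if (i : ℕ) = (j : ℕ) + 1 then -(G x (j : ℕ) / G x ((j : ℕ)+1)) else 0

noncomputable def mD' (x : ℝ) (n : ℕ) : Matrix (Fin n) (Fin n) ℝ :=
  Matrix.diagonal fun i => G x ((i : ℕ) + 1) / G x (i : ℕ)

lemma mDif_eval (a b : Fin n) :
    mDif n a b = if (a:ℕ) = (b:ℕ) then 1 else if (a:ℕ) = (b:ℕ)+1 then -1 else 0 := by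
  simp [mDif, Fin.ext_iff]

lemma mLo_eval (a b : Fin n) :
    mLo x n a b = if (a:ℕ) = (b:ℕ) then 1
      else if (a:ℕ) = (b:ℕ)+1 then -(G x (b:ℕ) / G x ((b:ℕ)+1)) else 0 := by
  simp [mLo, Fin.ext_iff]

lemma sum_row_zero (M : Matrix (Fin n) (Fin n) ℝ)
    (hM : ∀ a b : Fin n, M a b
      = if (a:ℕ) = (b:ℕ) then 1 else if (a:ℕ) = (b:ℕ)+1 then M a b else 0)
    (i : Fin n) (hi : (i:ℕ) = 0) (f : Fin n → ℝ) :
    ∑ k, M i k * f k = f i := by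
  rw [Finset.sum_eq_single_of_mem i (Finset.mem_univ i)]
  · rw [hM i i, if_pos rfl, one_mul]
  · intro k _ hk
    have hk' : (k:ℕ) ≠ (i:ℕ) := fun h => hk (Fin.ext h)
    rw [hM i k, if_neg (by omega), if_neg (by omega), zero_mul]

lemma sum_row_succ (M : Matrix (Fin n) (Fin n) ℝ)
    (hM : ∀ a b : Fin n, M a b
      = if (a:ℕ) = (b:ℕ) then 1 else if (a:ℕ) = (b:ℕ)+1 then M a b else 0)
    (i k0 : Fin n) (p : ℕ) (hi : (i:ℕ) = p+1) (hk0 : (k0:ℕ) = p) (f : Fin n → ℝ) :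
    ∑ k, M i k * f k = f i + M i k0 * f k0 := by
  rw [Finset.sum_eq_add_of_mem i k0 (Finset.mem_univ _) (Finset.mem_univ _)
      (by intro h; rw [Fin.ext_iff] at h; omega)]
  · rw [hM i i, if_pos rfl, one_mul]
  · intro c _ hc
    obtain ⟨hc1, hc2⟩ := hc
    have hc1' : (c:ℕ) ≠ (i:ℕ) := fun h => hc1 (Fin.ext h)
    have hc2' : (c:ℕ) ≠ (k0:ℕ) := fun h => hc2 (Fin.ext h)
    rw [hM i c, if_neg (by omega), if_neg (by omega), zero_mul]

lemma key4 : (x^2) • (1 : Matrix (Fin n) (Fin n) ℝ) + mDif n * (mDif n)ᵀ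
    = mLo x n * mD' x n * (mLo x n)ᵀ := by
  have hMDif : ∀ a b : Fin n, mDif n a b
      = if (a:ℕ) = (b:ℕ) then 1 else if (a:ℕ) = (b:ℕ)+1 then mDif n a b else 0 := by
    intro a b
    rw [mDif_eval]
    split_ifs <;> rfl
  have hMLo : ∀ a b : Fin n, mLo x n a b
      = if (a:ℕ) = (b:ℕ) then 1 else if (a:ℕ) = (b:ℕ)+1 then mLo x n a b else 0 := by
    intro a b
    rw [mLo_eval]
    split_ifs <;> rfl
  ext i j
  have hS1 : (mDif n * (mDif n)ᵀ) i j = ∑ k, mDif n i k * mDif n j k := by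
    rw [Matrix.mul_apply]
    exact Finset.sum_congr rfl fun k _ => by rw [Matrix.transpose_apply]
  have hS2 : (mLo x n * mD' x n * (mLo x n)ᵀ) i j
      = ∑ k, mLo x n i k * (G x ((k:ℕ)+1) / G x (k:ℕ) * mLo x n j k) := by
    rw [Matrix.mul_apply]
    refine Finset.sum_congr rfl fun k _ => ?_
    rw [mD', Matrix.mul_diagonal, Matrix.transpose_apply]
    ring
  rw [Matrix.add_apply, Matrix.smul_apply, hS1, hS2, smul_eq_mul]
  have hone : (1 : Matrix (Fin n) (Fin n) ℝ) i j = if (i:ℕ) = (j:ℕ) then 1 else 0 := by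
    simp [Matrix.one_apply, Fin.ext_iff]
  rw [hone]
  have hx1 : x^2 + 1 ≠ 0 := by positivity
  rcases hi : (i:ℕ) with _ | p
  · rw [sum_row_zero (mDif n) hMDif i hi, sum_row_zero (mLo x n) hMLo i hi]
    have e01 : G x (0+1) = x^2+1 := G_one x
    have e1 : G x 1 = x^2+1 := G_one x
    simp only [mDif_eval, mLo_eval, hi, G_zero, e01, e1]
    have h1x : (1:ℝ) + x^2 ≠ 0 := by positivity
    rcases hj : (j:ℕ) with _ | q
    · split_ifs <;>
        first
          | (exfalso; first | omega | assumption)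
          | ring1
          | (field_simp [hx1, h1x]; ring1)
          | (field_simp [hx1, h1x])
    · split_ifs <;>
        first
          | (exfalso; first | omega | assumption)
          | ring1
          | (field_simp [hx1, h1x]; ring1)
          | (field_simp [hx1, h1x])
  · have hp : p < n := by have := i.isLt; omega
    obtain ⟨k0, hk0⟩ : ∃ k0 : Fin n, (k0:ℕ) = p := ⟨⟨p, hp⟩, rfl⟩
    rw [sum_row_succ (mDif n) hMDif i k0 p hi hk0, sum_row_succ (mLo x n) hMLo i k0 p hi hk0]
    have hGp := (G_pos x p).ne'
    have hGp1 := (G_pos x (p+1)).ne'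
    have hGp2 := (G_pos x (p+2)).ne'
    have hGp11 : G x (p+1+1) ≠ 0 := hGp2
    have hrec' : G x (p+1+1) = (x^2+2) * G x (p+1) - G x p := G_rec x p
    simp only [mDif_eval, mLo_eval, hk0, hi]
    rcases hj : (j:ℕ) with _ | q
    · split_ifs <;>
        first
          | (exfalso; first | omega | assumption)
          | ring1
          | (field_simp [hGp, hGp1, hGp11]; ring1)
          | (rw [hrec']; field_simp [hGp, hGp1]; ring1)
          | (rw [hrec']; field_simp [hGp, hGp1])
          | (field_simp [hGp, hGp1, hGp11])
    · split_ifs <;>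
        first
          | (exfalso; first | omega | assumption)
          | ring1
          | (field_simp [hGp, hGp1, hGp11]; ring1)
          | (rw [hrec']; field_simp [hGp, hGp1]; ring1)
          | (rw [hrec']; field_simp [hGp, hGp1])
          | (field_simp [hGp, hGp1, hGp11])

lemma mD_mul_mD : mD n * mD n = 1 := by
  rw [mD, Matrix.diagonal_mul_diagonal]
  have h : (fun i : Fin n => (-1:ℝ)^(i:ℕ) * (-1)^(i:ℕ)) = fun _ => 1 := by
    funext i
    rw [← pow_add]
    exact Even.neg_one_pow ⟨(i:ℕ), rfl⟩
  rw [h, Matrix.diagonal_one]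

lemma det_mB : (mB n).det = 1 := by
  rw [Matrix.det_of_lowerTriangular (mB n)
    (by
      intro i j h
      have hij : i < j := h
      rw [mB_apply, Nat.choose_eq_zero_of_lt (by exact_mod_cast Nat.succ_lt_succ hij)]
      norm_num)]
  refine Finset.prod_eq_one fun i _ => ?_
  rw [mB_apply, Nat.choose_self]
  norm_num

lemma det_mL : (mL n).det = 1 := by
  rw [Matrix.det_of_lowerTriangular (mL n)
    (by
      intro i j h
      have hij : i < j := h
      show (if (j:ℕ) ≤ (i:ℕ) then (1:ℝ) else 0) = 0
      rw [if_neg (by omega : ¬ (j:ℕ) ≤ (i:ℕ))])]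
  refine Finset.prod_eq_one fun i _ => ?_
  show (if (i:ℕ) ≤ (i:ℕ) then (1:ℝ) else 0) = 1
  rw [if_pos le_rfl]

lemma det_mLo : (mLo x n).det = 1 := by
  rw [Matrix.det_of_lowerTriangular (mLo x n)
    (by
      intro i j h
      have hij : i < j := h
      have hij' : (i:ℕ) < (j:ℕ) := hij
      rw [mLo_eval, if_neg (by omega), if_neg (by omega)])]
  refine Finset.prod_eq_one fun i _ => ?_
  rw [mLo_eval, if_pos rfl]

lemma prod_G (x : ℝ) (m : ℕ) : ∏ i ∈ range m, (G x (i+1) / G x i) = G x m := by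
  induction m with
  | zero => rw [Finset.prod_range_zero, G_zero]
  | succ m ih =>
    rw [Finset.prod_range_succ, ih, mul_comm, div_mul_cancel₀ _ (G_pos x m).ne']

lemma det_mD' : (mD' x n).det = G x n := by
  rw [mD', Matrix.det_diagonal]
  rw [Fin.prod_univ_eq_prod_range (fun i => G x (i+1) / G x i) n]
  exact prod_G x n

lemma factor : x^2 • mA n + mB n
    = mB n * mD n * mL n * (mLo x n * mD' x n * (mLo x n)ᵀ) * (mL n)ᵀ * mD n := by
  have h1 : mDif n * mL n = 1 := key1
  have h1' : mL n * mDif n = 1 := mul_eq_one_comm.mp h1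
  have hT : (mDif n)ᵀ * (mL n)ᵀ = 1 := by
    rw [← Matrix.transpose_mul, h1', Matrix.transpose_one]
  have hDD : mD n * mD n = 1 := mD_mul_mD
  rw [← key4 x]
  rw [Matrix.mul_add, Matrix.add_mul, Matrix.add_mul]
  have term1 : mB n * mD n * mL n * (x ^ 2 • 1) * (mL n)ᵀ * mD n = x^2 • mA n := by
    rw [Matrix.mul_smul, Matrix.mul_one, Matrix.smul_mul, Matrix.smul_mul]
    rw [key3]
    rw [Matrix.mul_assoc (mA n * mD n) ((mDif n)ᵀ) ((mL n)ᵀ), hT, Matrix.mul_one]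
    rw [Matrix.mul_assoc (mA n) (mD n) (mD n), hDD, Matrix.mul_one]
  have term2 : mB n * mD n * mL n * (mDif n * (mDif n)ᵀ) * (mL n)ᵀ * mD n = mB n := by
    rw [← Matrix.mul_assoc (mB n * mD n * mL n) (mDif n) ((mDif n)ᵀ)]
    rw [Matrix.mul_assoc (mB n * mD n) (mL n) (mDif n), h1', Matrix.mul_one]
    rw [Matrix.mul_assoc (mB n * mD n) ((mDif n)ᵀ) ((mL n)ᵀ), hT, Matrix.mul_one]
    rw [Matrix.mul_assoc (mB n) (mD n) (mD n), hDD, Matrix.mul_one]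
  rw [term1, term2]

lemma main_det (x : ℝ) :
    Matrix.det (Matrix.of fun i j : Fin n =>
        (gchoose ((i : ℤ) - 1) (j : ℤ) : ℝ) * x ^ 2 +
        (gchoose ((i : ℤ) + 1) ((j : ℤ) + 1) : ℝ)) = G x n := by
  have hM : (Matrix.of fun i j : Fin n =>
        (gchoose ((i : ℤ) - 1) (j : ℤ) : ℝ) * x ^ 2 +
        (gchoose ((i : ℤ) + 1) ((j : ℤ) + 1) : ℝ)) = x^2 • mA n + mB n := by
    ext i j
    simp only [Matrix.of_apply, Matrix.add_apply, Matrix.smul_apply, smul_eq_mul, mA, mB]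
    ring
  rw [hM, factor]
  rw [Matrix.det_mul, Matrix.det_mul, Matrix.det_mul, Matrix.det_mul, Matrix.det_mul,
    Matrix.det_mul, Matrix.det_mul]
  rw [Matrix.det_transpose, Matrix.det_transpose, det_mB, det_mL, det_mLo, det_mD']
  have hdd : (mD n).det * (mD n).det = 1 := by
    rw [← Matrix.det_mul, mD_mul_mD, Matrix.det_one]
  linear_combination (G x n) * hdd

end DF

theorem det_eq_fib_even (n : ℕ) (hn : 1 ≤ n) (x : ℝ) :
    Matrix.det (Matrix.of fun i j : Fin n =>
        (gchoose ((i : ℤ) - 1) (j : ℤ) : ℝ) * x ^ 2 +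
        (gchoose ((i : ℤ) + 1) ((j : ℤ) + 1) : ℝ)) = fibP (2 * n) x := by
  have h := DF.fib_eq_G x n
  unfold fibP
  rw [h]
  exact DF.main_det x
end

section
/- For n ≥ 1, x·det((C(i,j)·x² + C(i+2,j+1))_{i,j=0}^{n-1}) = F_{2n+1}(x). -/
lemma gchoose_nat (i j : ℕ) : gchoose (i : ℤ) (j : ℤ) = (Nat.choose i j : ℤ) := by
  simp [gchoose, Ring.choose_natCast]

lemma fibP_ext (m : ℕ) (x : ℝ) :
    fibP m x = ∑ k ∈ Finset.range (m + 1), (Nat.choose (m - k) k : ℝ) * x ^ (m - 2 * k) := by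
  rw [fibP]
  apply Finset.sum_subset
  · apply Finset.range_subset_range.2; omega
  · intro k hk hk2
    simp only [Finset.mem_range] at hk hk2
    rw [Nat.choose_eq_zero_of_lt (by omega)]
    simp

lemma fibP_rec (m : ℕ) (x : ℝ) : fibP (m + 2) x = x * fibP (m + 1) x + fibP m x := by
  have e0 : ((m + 2 - 0).choose 0 : ℝ) * x ^ (m + 2 - 2 * 0) = x ^ (m + 2) := by simp
  have e1 : x * (((m + 1 - 0).choose 0 : ℝ) * x ^ (m + 1 - 2 * 0)) = x ^ (m + 2) := by
    simp; ring
  have hL : fibP (m + 2) x = (∑ k ∈ Finset.range (m + 2),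
      ((m + 2 - (k + 1)).choose (k + 1) : ℝ) * x ^ (m + 2 - 2 * (k + 1))) + x ^ (m + 2) := by
    rw [fibP_ext, Finset.sum_range_succ' _ (m + 2), e0]
  have hR : x * fibP (m + 1) x = (∑ k ∈ Finset.range (m + 1),
      x * (((m + 1 - (k + 1)).choose (k + 1) : ℝ) * x ^ (m + 1 - 2 * (k + 1)))) + x ^ (m + 2) := by
    rw [fibP_ext, Finset.mul_sum, Finset.sum_range_succ' _ (m + 1), e1]
  rw [hL, hR, fibP_ext]
  have pascal : ∀ k ∈ Finset.range (m + 2),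
      ((m + 2 - (k + 1)).choose (k + 1) : ℝ) * x ^ (m + 2 - 2 * (k + 1)) =
      ((m - k).choose (k + 1) : ℝ) * x ^ (m - 2 * k - 1) * x
        + ((m - k).choose k : ℝ) * x ^ (m - 2 * k) := by
    intro k hk
    simp only [Finset.mem_range] at hk
    rcases Nat.lt_or_ge k (m + 1) with h | h
    · have h1 : m + 2 - (k + 1) = (m - k) + 1 := by omega
      rcases Nat.lt_or_ge (2 * k + 1) (m + 1) with h2 | h2
      · have h3 : x ^ (m + 2 - 2 * (k + 1)) = x ^ (m - 2 * k - 1) * x := by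
          rw [← pow_succ]; congr 1; omega
        have h4 : x ^ (m - 2 * k) = x ^ (m - 2 * k - 1) * x := by
          rw [← pow_succ]; congr 1; omega
        rw [h1, Nat.choose_succ_succ' (m - k) k, h3, h4]
        push_cast; ring
      · have hlt : (m - k) < k + 1 := by omega
        have hmk : m - 2 * k = 0 := by omega
        have hm2 : m + 2 - 2 * (k + 1) = 0 := by omega
        rw [h1, Nat.choose_succ_succ' (m - k) k, Nat.choose_eq_zero_of_lt hlt, hmk, hm2]
        push_cast; simp
    · -- k = m + 1
      have hk1 : k = m + 1 := by omega
      subst hk1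
      rw [Nat.choose_eq_zero_of_lt (by omega), Nat.choose_eq_zero_of_lt (by omega),
        Nat.choose_eq_zero_of_lt (by omega)]
      simp
  rw [Finset.sum_congr rfl pascal, Finset.sum_add_distrib]
  have left : ∑ k ∈ Finset.range (m + 2), ((m - k).choose (k + 1) : ℝ) * x ^ (m - 2 * k - 1) * x
      = ∑ k ∈ Finset.range (m + 1), x * (((m + 1 - (k + 1)).choose (k + 1) : ℝ) * x ^ (m + 1 - 2 * (k + 1))) := by
    rw [Finset.sum_range_succ, Nat.choose_eq_zero_of_lt (by omega)]
    simp only [Nat.cast_zero, zero_mul, add_zero]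
    apply Finset.sum_congr rfl
    intro k hk
    have h1 : m + 1 - (k + 1) = m - k := by omega
    have h2 : m + 1 - 2 * (k + 1) = m - 2 * k - 1 := by omega
    rw [h1, h2]; ring
  have right : ∑ k ∈ Finset.range (m + 2), ((m - k).choose k : ℝ) * x ^ (m - 2 * k)
      = ∑ k ∈ Finset.range (m + 1), ((m - k).choose k : ℝ) * x ^ (m - 2 * k) := by
    rw [Finset.sum_range_succ, Nat.choose_eq_zero_of_lt (by omega)]
    simp
  rw [left, right]; ring

noncomputable def tfun (x : ℝ) (a b : ℕ) : ℝ :=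
  if a = b then x ^ 2 + 2 else if a + 1 = b ∨ b + 1 = a then 1 else 0

noncomputable def triM (x : ℝ) (n : ℕ) : Matrix (Fin n) (Fin n) ℝ :=
  Matrix.of fun i j => tfun x (i : ℕ) (j : ℕ)

lemma tfun_shift (x : ℝ) (a b : ℕ) : tfun x (a + 1) (b + 1) = tfun x a b := by
  unfold tfun
  rw [if_congr (by omega : (a + 1 = b + 1) ↔ (a = b)) rfl rfl,
    if_congr (by omega : (a + 1 + 1 = b + 1 ∨ b + 1 + 1 = a + 1) ↔ (a + 1 = b ∨ b + 1 = a)) rfl rfl]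

lemma tri_rec (x : ℝ) (n : ℕ) :
    (triM x (n + 2)).det = (x ^ 2 + 2) * (triM x (n + 1)).det - (triM x n).det := by
  rw [Matrix.det_succ_row_zero, Fin.sum_univ_succ, Fin.sum_univ_succ]
  have hz : ∀ j : Fin n, ((-1 : ℝ)) ^ ((j.succ.succ : Fin (n + 2)) : ℕ) *
      (triM x (n + 2)) 0 j.succ.succ *
      ((triM x (n + 2)).submatrix Fin.succ j.succ.succ.succAbove).det = 0 := by
    intro j
    have : (triM x (n + 2)) 0 j.succ.succ = 0 := by
      simp only [triM, Matrix.of_apply, tfun, Fin.val_succ, Fin.val_zero]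
      simp
    rw [this]; ring
  rw [Finset.sum_congr rfl (fun j _ => hz j), Finset.sum_const_zero, add_zero]
  have m00 : (triM x (n + 2)).submatrix Fin.succ ((0 : Fin (n + 2)).succAbove) = triM x (n + 1) := by
    ext i j
    simp only [Matrix.submatrix_apply, Fin.succAbove_zero, triM, Matrix.of_apply, Fin.val_succ]
    exact tfun_shift x i j
  have a00 : (triM x (n + 2)) 0 0 = x ^ 2 + 2 := by
    simp [triM, tfun]
  have a01 : (triM x (n + 2)) 0 1 = 1 := by
    simp only [triM, Matrix.of_apply, tfun, Fin.val_zero, Fin.val_one]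
    norm_num
  -- the (0,1) minor
  set B := (triM x (n + 2)).submatrix Fin.succ ((1 : Fin (n + 2)).succAbove) with hB
  have hBdet : B.det = (triM x n).det := by
    rw [Matrix.det_succ_column_zero, Fin.sum_univ_succ]
    have hcol0 : ((1 : Fin (n + 2)).succAbove 0 : ℕ) = 0 := by
      rw [Fin.succAbove_of_castSucc_lt _ _ (by simp [Fin.lt_def])]
      simp
    have hBz : ∀ i : Fin n, ((-1 : ℝ)) ^ ((i.succ : Fin (n + 1)) : ℕ) * B i.succ 0 *
        (B.submatrix i.succ.succAbove Fin.succ).det = 0 := by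
      intro i
      have : B i.succ 0 = 0 := by
        simp only [hB, Matrix.submatrix_apply, triM, Matrix.of_apply]
        have h1 : ((Fin.succ (Fin.succ i) : Fin (n + 2)) : ℕ) = (i : ℕ) + 2 := by simp
        rw [h1, hcol0]
        simp only [tfun]
        rw [if_neg (by omega), if_neg (by omega)]
      rw [this]; ring
    rw [Finset.sum_congr rfl (fun i _ => hBz i), Finset.sum_const_zero, add_zero]
    have hB00 : B 0 0 = 1 := by
      simp only [hB, Matrix.submatrix_apply, triM, Matrix.of_apply]
      have h1 : ((Fin.succ (0 : Fin (n + 1)) : Fin (n + 2)) : ℕ) = 1 := by simp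
      rw [h1, hcol0]
      simp only [tfun]
      norm_num
    have hsub : B.submatrix ((0 : Fin (n + 1)).succAbove) Fin.succ = triM x n := by
      ext i j
      simp only [hB, Matrix.submatrix_apply, Fin.succAbove_zero, triM, Matrix.of_apply]
      have h1 : ((Fin.succ (Fin.succ i) : Fin (n + 2)) : ℕ) = (i : ℕ) + 2 := by simp
      have h2 : (((1 : Fin (n + 2)).succAbove (Fin.succ j)) : ℕ) = (j : ℕ) + 2 := by
        rw [Fin.succAbove_of_le_castSucc _ _ (by
          rw [Fin.le_def, Fin.val_one, Fin.coe_castSucc, Fin.val_succ]; omega)]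
        simp
      rw [h1, h2, tfun_shift, tfun_shift]
    rw [hB00, hsub]
    simp
  simp only [Fin.succ_zero_eq_one]
  rw [m00, a00, a01, hBdet]
  simp [Fin.val_one]
  ring

noncomputable def pasc (n : ℕ) : Matrix (Fin n) (Fin n) ℝ :=
  Matrix.of fun i j => (Nat.choose (i : ℕ) (j : ℕ) : ℝ)

lemma pasc_det (n : ℕ) : (pasc n).det = 1 := by
  rw [Matrix.det_of_lowerTriangular (pasc n)
    (fun i j h => by
      simp only [pasc, Matrix.of_apply]
      rw [Nat.choose_eq_zero_of_lt (by exact_mod_cast h)]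
      simp)]
  simp [pasc]

lemma tfun_split (x : ℝ) (a b : ℕ) : tfun x a b =
    (x ^ 2 + 2) * (if a = b then (1 : ℝ) else 0) +
    (if a + 1 = b then (1 : ℝ) else 0) + (if b + 1 = a then (1 : ℝ) else 0) := by
  unfold tfun
  split_ifs with h1 h2 h3 h4 h5 h6 h7 <;> (try omega) <;> ring

lemma sumS1 (f : ℕ → ℝ) (n c : ℕ) (hc : c < n) :
    ∑ k ∈ Finset.range n, f k * (if k = c then (1:ℝ) else 0) = f c := by
  have : ∀ k ∈ Finset.range n, f k * (if k = c then (1:ℝ) else 0) = if k = c then f k else 0 := by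
    intro k _; split_ifs <;> ring
  rw [Finset.sum_congr rfl this, Finset.sum_ite_eq', if_pos (Finset.mem_range.2 hc)]

lemma sumS2 (f : ℕ → ℝ) (n c : ℕ) (hc : c < n) :
    ∑ k ∈ Finset.range n, f k * (if k + 1 = c then (1:ℝ) else 0) =
      if c = 0 then 0 else f (c - 1) := by
  rcases Nat.eq_zero_or_pos c with h | h
  · subst h; simp
  · rw [if_neg (by omega)]
    have : ∀ k ∈ Finset.range n, f k * (if k + 1 = c then (1:ℝ) else 0)
        = if k = c - 1 then f k else 0 := by
      intro k _
      rw [if_congr (by omega : (k + 1 = c) ↔ (k = c - 1)) rfl rfl]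
      split_ifs <;> ring
    rw [Finset.sum_congr rfl this, Finset.sum_ite_eq', if_pos (Finset.mem_range.2 (by omega))]

lemma sumS3 (f : ℕ → ℝ) (n c : ℕ) :
    ∑ k ∈ Finset.range n, f k * (if c + 1 = k then (1:ℝ) else 0) =
      if c + 1 < n then f (c + 1) else 0 := by
  have : ∀ k ∈ Finset.range n, f k * (if c + 1 = k then (1:ℝ) else 0)
      = if k = c + 1 then f k else 0 := by
    intro k _
    rw [if_congr (by omega : (c + 1 = k) ↔ (k = c + 1)) rfl rfl]
    split_ifs <;> ring
  rw [Finset.sum_congr rfl this, Finset.sum_ite_eq']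
  simp [Finset.mem_range]

lemma chooseId (i j : ℕ) : (i + 2).choose (j + 1) =
    i.choose (j + 1) + 2 * i.choose j + (if j = 0 then 0 else i.choose (j - 1)) := by
  rcases j with _ | t
  · simp [Nat.choose_succ_succ]
    omega
  · rw [if_neg (by omega)]
    simp only [Nat.choose_succ_succ (i + 1), Nat.choose_succ_succ i]
    simp only [Nat.succ_eq_add_one, Nat.add_sub_cancel]
    omega

lemma entry_eq (x : ℝ) (n : ℕ) (i j : Fin n) :
    (pasc n * triM x n) i j =
      (Nat.choose (i : ℕ) (j : ℕ) : ℝ) * x ^ 2 + (Nat.choose ((i : ℕ) + 2) ((j : ℕ) + 1) : ℝ) := by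
  rw [Matrix.mul_apply]
  simp only [pasc, triM, Matrix.of_apply]
  rw [Fin.sum_univ_eq_sum_range (fun k => (Nat.choose (i : ℕ) k : ℝ) * tfun x k (j : ℕ)) n]
  have split : ∀ k ∈ Finset.range n, (Nat.choose (i : ℕ) k : ℝ) * tfun x k (j : ℕ) =
      (x ^ 2 + 2) * ((Nat.choose (i : ℕ) k : ℝ) * (if k = (j : ℕ) then (1:ℝ) else 0)) +
      ((Nat.choose (i : ℕ) k : ℝ) * (if k + 1 = (j : ℕ) then (1:ℝ) else 0)) +
      ((Nat.choose (i : ℕ) k : ℝ) * (if (j : ℕ) + 1 = k then (1:ℝ) else 0)) := by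
    intro k _; rw [tfun_split]; ring
  rw [Finset.sum_congr rfl split, Finset.sum_add_distrib, Finset.sum_add_distrib,
    ← Finset.mul_sum, sumS1 _ _ _ j.isLt, sumS2 _ _ _ j.isLt, sumS3]
  have h3 : (if (j : ℕ) + 1 < n then (Nat.choose (i : ℕ) ((j : ℕ) + 1) : ℝ) else 0)
      = (Nat.choose (i : ℕ) ((j : ℕ) + 1) : ℝ) := by
    split_ifs with h
    · rfl
    · rw [Nat.choose_eq_zero_of_lt (by have := i.isLt; omega)]; simp
  rw [h3, chooseId]
  by_cases hj : (j : ℕ) = 0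
  · rw [if_pos hj, if_pos hj]
    push_cast
    ring
  · rw [if_neg hj, if_neg hj]
    push_cast
    ring

lemma key (x : ℝ) : ∀ n : ℕ, x * (triM x n).det = fibP (2 * n + 1) x ∧
    x * (triM x (n + 1)).det = fibP (2 * (n + 1) + 1) x := by
  intro n
  induction n with
  | zero =>
    constructor
    · have h0 : (triM x 0).det = 1 := Matrix.det_fin_zero
      rw [h0]
      simp [fibP, Finset.sum_range_succ]
    · have h1 : (triM x 1).det = x ^ 2 + 2 := by
        rw [Matrix.det_fin_one]
        simp [triM, tfun]
      rw [h1]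
      simp [fibP, Finset.sum_range_succ]
      ring
  | succ n ih =>
    refine ⟨ih.2, ?_⟩
    rw [tri_rec]
    have IH1 := ih.1
    have IH2 := ih.2
    rw [show 2 * (n + 1) + 1 = 2 * n + 3 from by ring] at IH2
    rw [show 2 * (n + 1 + 1) + 1 = 2 * n + 5 from by ring]
    have hA := fibP_rec (2 * n + 3) x
    have hB := fibP_rec (2 * n + 2) x
    have hC := fibP_rec (2 * n + 1) x
    rw [show 2 * n + 3 + 2 = 2 * n + 5 from by ring, show 2 * n + 3 + 1 = 2 * n + 4 from by ring] at hA
    rw [show 2 * n + 2 + 2 = 2 * n + 4 from by ring, show 2 * n + 2 + 1 = 2 * n + 3 from by ring] at hB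
    rw [show 2 * n + 1 + 2 = 2 * n + 3 from by ring, show 2 * n + 1 + 1 = 2 * n + 2 from by ring] at hC
    linear_combination (x ^ 2 + 2) * IH2 - IH1 - hA - x * hB + hC

theorem det_eq_fib_odd (n : ℕ) (hn : 1 ≤ n) (x : ℝ) :
    x * Matrix.det (Matrix.of fun i j : Fin n =>
        (gchoose (i : ℤ) (j : ℤ) : ℝ) * x ^ 2 +
        (gchoose ((i : ℤ) + 2) ((j : ℤ) + 1) : ℝ)) = fibP (2 * n + 1) x := by
  have hM : (Matrix.of fun i j : Fin n =>
      (gchoose (i : ℤ) (j : ℤ) : ℝ) * x ^ 2 +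
      (gchoose ((i : ℤ) + 2) ((j : ℤ) + 1) : ℝ)) = pasc n * triM x n := by
    ext i j
    rw [entry_eq]
    simp only [Matrix.of_apply]
    have e1 : gchoose (i : ℤ) (j : ℤ) = (Nat.choose (i : ℕ) (j : ℕ) : ℤ) := gchoose_nat _ _
    have e2 : gchoose ((i : ℤ) + 2) ((j : ℤ) + 1) = (Nat.choose ((i : ℕ) + 2) ((j : ℕ) + 1) : ℤ) := by
      have : ((i : ℤ) + 2) = (((i : ℕ) + 2 : ℕ) : ℤ) := by push_cast; ring
      have h2 : ((j : ℤ) + 1) = (((j : ℕ) + 1 : ℕ) : ℤ) := by push_cast; ring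
      rw [this, h2]
      exact gchoose_nat _ _
    rw [e1, e2]
    push_cast
    ring
  rw [hM, Matrix.det_mul, pasc_det, one_mul]
  exact (key x n).1
end

section
/- For n ≥ 1, det((C(i+1,j+1)·x² − C(i,j-1))_{i,j=0}^{n-1}) = x^n·F_n(x). -/
noncomputable def Atri (n : ℕ) (x : ℝ) : Matrix (Fin n) (Fin n) ℝ :=
  Matrix.of fun i j =>
    (if (i : ℕ) = (j : ℕ) then x ^ 2 else 0) +
    (if (i : ℕ) = (j : ℕ) + 1 then x ^ 2 else 0) +
    (if (j : ℕ) = (i : ℕ) + 1 then (-1 : ℝ) else 0)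

theorem fib_rec (n : ℕ) (x : ℝ) : fibP (n+2) x = x * fibP (n+1) x + fibP n x := by
  rcases Nat.even_or_odd n with ⟨m, hm⟩ | ⟨m, hm⟩
  · -- n = 2m
    subst hm
    have e1 : (m + m + 2)/2 + 1 = m + 2 := by omega
    have e2 : (m + m + 1)/2 + 1 = m + 1 := by omega
    have e3 : (m + m)/2 + 1 = m + 1 := by omega
    unfold fibP
    rw [e1, e2, e3]
    have hL : ∑ k ∈ Finset.range (m+2), (Nat.choose (m+m+2-k) k : ℝ) * x ^ (m+m+2-2*k)
        = (∑ k ∈ Finset.range m, (Nat.choose (m+m-k) (k+1) : ℝ) * x ^ (m+m-2*k))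
          + (∑ k ∈ Finset.range (m+1), (Nat.choose (m+m-k) k : ℝ) * x ^ (m+m-2*k))
          + x ^ (m+m+2) := by
      rw [Finset.sum_range_succ']
      have L : ∀ k ∈ Finset.range (m+1),
          (Nat.choose (m+m+2-(k+1)) (k+1) : ℝ) * x ^ (m+m+2-2*(k+1))
          = (Nat.choose (m+m-k) (k+1) : ℝ) * x ^ (m+m-2*k)
            + (Nat.choose (m+m-k) k : ℝ) * x ^ (m+m-2*k) := by
        intro k hk
        have hk' : k ≤ m := by have := Finset.mem_range.mp hk; omega
        have h1 : m+m+2-(k+1) = (m+m-k)+1 := by omega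
        have h2 : m+m+2-2*(k+1) = m+m-2*k := by omega
        rw [h1, h2, Nat.choose_succ_succ]
        push_cast; ring
      rw [Finset.sum_congr rfl L, Finset.sum_add_distrib]
      have htop : (∑ k ∈ Finset.range (m+1), (Nat.choose (m+m-k) (k+1) : ℝ) * x ^ (m+m-2*k))
          = ∑ k ∈ Finset.range m, (Nat.choose (m+m-k) (k+1) : ℝ) * x ^ (m+m-2*k) := by
        rw [Finset.sum_range_succ]
        have : m + m - m = m := by omega
        rw [this, Nat.choose_succ_self]
        simp
      rw [htop]
      have : (Nat.choose (m+m+2-0) 0 : ℝ) * x ^ (m+m+2-2*0) = x ^ (m+m+2) := by simp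
      rw [this]
      try ring
    have hR : x * ∑ k ∈ Finset.range (m+1), (Nat.choose (m+m+1-k) k : ℝ) * x ^ (m+m+1-2*k)
        = (∑ k ∈ Finset.range m, (Nat.choose (m+m-k) (k+1) : ℝ) * x ^ (m+m-2*k))
          + x ^ (m+m+2) := by
      rw [Finset.mul_sum, Finset.sum_range_succ']
      have L : ∀ k ∈ Finset.range m,
          x * ((Nat.choose (m+m+1-(k+1)) (k+1) : ℝ) * x ^ (m+m+1-2*(k+1)))
          = (Nat.choose (m+m-k) (k+1) : ℝ) * x ^ (m+m-2*k) := by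
        intro k hk
        have hk' : k < m := Finset.mem_range.mp hk
        have h1 : m+m+1-(k+1) = m+m-k := by omega
        have h2 : m+m-2*k = (m+m+1-2*(k+1)) + 1 := by omega
        rw [h1, h2, pow_succ]
        ring
      rw [Finset.sum_congr rfl L]
      have : x * ((Nat.choose (m+m+1-0) 0 : ℝ) * x ^ (m+m+1-2*0)) = x ^ (m+m+2) := by
        simp [pow_succ]; ring
      rw [this]
    rw [hL, hR]; ring
  · -- n = 2m+1
    subst hm
    have e1 : (2*m+1+2)/2 + 1 = m + 2 := by omega
    have e2 : (2*m+1+1)/2 + 1 = m + 2 := by omega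
    have e3 : (2*m+1)/2 + 1 = m + 1 := by omega
    unfold fibP
    rw [e1, e2, e3]
    have hL : ∑ k ∈ Finset.range (m+2), (Nat.choose (2*m+1+2-k) k : ℝ) * x ^ (2*m+1+2-2*k)
        = (∑ k ∈ Finset.range (m+1), (Nat.choose (2*m+1-k) (k+1) : ℝ) * x ^ (2*m+1-2*k))
          + (∑ k ∈ Finset.range (m+1), (Nat.choose (2*m+1-k) k : ℝ) * x ^ (2*m+1-2*k))
          + x ^ (2*m+3) := by
      rw [Finset.sum_range_succ']
      have L : ∀ k ∈ Finset.range (m+1),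
          (Nat.choose (2*m+1+2-(k+1)) (k+1) : ℝ) * x ^ (2*m+1+2-2*(k+1))
          = (Nat.choose (2*m+1-k) (k+1) : ℝ) * x ^ (2*m+1-2*k)
            + (Nat.choose (2*m+1-k) k : ℝ) * x ^ (2*m+1-2*k) := by
        intro k hk
        have hk' : k ≤ m := by have := Finset.mem_range.mp hk; omega
        have h1 : 2*m+1+2-(k+1) = (2*m+1-k)+1 := by omega
        have h2 : 2*m+1+2-2*(k+1) = 2*m+1-2*k := by omega
        rw [h1, h2, Nat.choose_succ_succ]
        push_cast; ring
      rw [Finset.sum_congr rfl L, Finset.sum_add_distrib]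
      have : (Nat.choose (2*m+1+2-0) 0 : ℝ) * x ^ (2*m+1+2-2*0) = x ^ (2*m+3) := by
        norm_num
      rw [this]
      try ring
    have hR : x * ∑ k ∈ Finset.range (m+2), (Nat.choose (2*m+1+1-k) k : ℝ) * x ^ (2*m+1+1-2*k)
        = (∑ k ∈ Finset.range (m+1), (Nat.choose (2*m+1-k) (k+1) : ℝ) * x ^ (2*m+1-2*k))
          + x ^ (2*m+3) := by
      rw [Finset.mul_sum, Finset.sum_range_succ']
      have L : ∀ k ∈ Finset.range (m+1),
          x * ((Nat.choose (2*m+1+1-(k+1)) (k+1) : ℝ) * x ^ (2*m+1+1-2*(k+1)))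
          = (Nat.choose (2*m+1-k) (k+1) : ℝ) * x ^ (2*m+1-2*k) := by
        intro k hk
        have hk' : k ≤ m := by have := Finset.mem_range.mp hk; omega
        have h1 : 2*m+1+1-(k+1) = 2*m+1-k := by omega
        have h2 : 2*m+1-2*k = (2*m+1+1-2*(k+1)) + 1 := by omega
        rw [h1, h2, pow_succ]
        ring
      rw [Finset.sum_congr rfl L]
      have : x * ((Nat.choose (2*m+1+1-0) 0 : ℝ) * x ^ (2*m+1+1-2*0)) = x ^ (2*m+3) := by
        simp [pow_succ]; ring
      rw [this]
    rw [hL, hR]; ring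


theorem Atri_rec (n : ℕ) (x : ℝ) :
    (Atri (n+2) x).det = x^2 * (Atri (n+1) x).det + x^2 * (Atri n x).det := by
  rw [Matrix.det_succ_row_zero]
  rw [Fin.sum_univ_succ, Fin.sum_univ_succ]
  have hz : ∀ j : Fin n, Atri (n+2) x 0 j.succ.succ = 0 := by
    intro j; simp [Atri, Fin.val_succ]
  simp only [hz, mul_zero, zero_mul, Finset.sum_const_zero, add_zero]
  have h00 : Atri (n+2) x 0 0 = x^2 := by simp [Atri]
  have h01 : Atri (n+2) x 0 (Fin.succ 0) = -1 := by simp [Atri]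
  rw [h00, h01]
  have hsub0 : (Atri (n+2) x).submatrix Fin.succ (0 : Fin (n+2)).succAbove
      = Atri (n+1) x := by
    ext i j
    simp [Atri, Fin.succAbove, Fin.val_succ]
  rw [hsub0]
  -- second minor
  set B := (Atri (n+2) x).submatrix Fin.succ (Fin.succ (0 : Fin (n+1))).succAbove with hB
  have hBdet : B.det = x^2 * (Atri n x).det := by
    rw [Matrix.det_succ_column_zero, Fin.sum_univ_succ]
    have hz' : ∀ i : Fin n, B i.succ 0 = 0 := by
      intro i
      simp [hB, Atri, Fin.succAbove, Fin.val_succ]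
    simp only [hz', mul_zero, zero_mul, Finset.sum_const_zero, add_zero]
    have hB00 : B 0 0 = x^2 := by simp [hB, Atri, Fin.succAbove]
    have hsub : B.submatrix (0 : Fin (n+1)).succAbove Fin.succ = Atri n x := by
      ext i j
      simp [hB, Atri, Fin.succAbove, Fin.succ_ne_zero, Fin.val_succ]
    rw [hB00, hsub]
    norm_num
  rw [hBdet]
  simp [Fin.val_succ]


theorem Atri_det (n : ℕ) (x : ℝ) : (Atri n x).det = x ^ n * fibP n x := by
  induction n using Nat.twoStepInduction with
  | zero => simp [fibP, Matrix.det_fin_zero]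
  | one => simp [fibP, Matrix.det_fin_one, Atri]; ring
  | more n ih1 ih2 =>
    rw [Atri_rec, ih1, ih2, fib_rec]
    ring

theorem gchoose_nat_s9 (a b : ℕ) : gchoose (a : ℤ) (b : ℤ) = Nat.choose a b := by
  simp [gchoose, Ring.choose_natCast]

theorem gchoose_neg (a : ℤ) : gchoose a (-1) = 0 := by simp [gchoose]


theorem det_eq_pow_mul_fib (n : ℕ) (hn : 1 ≤ n) (x : ℝ) :
    Matrix.det (Matrix.of fun i j : Fin n =>
        (gchoose ((i : ℤ) + 1) ((j : ℤ) + 1) : ℝ) * x ^ 2 -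
        (gchoose (i : ℤ) ((j : ℤ) - 1) : ℝ)) = x ^ n * fibP n x := by
  have hP : (Matrix.of fun i j : Fin n => (Nat.choose (i : ℕ) (j : ℕ) : ℝ)).det = 1 := by
    have ht : (Matrix.of fun i j : Fin n => (Nat.choose (i : ℕ) (j : ℕ) : ℝ)).BlockTriangular
        OrderDual.toDual := by
      intro i j hij
      simp only [Matrix.of_apply]
      rw [Nat.choose_eq_zero_of_lt (by exact_mod_cast hij)]
      simp
    rw [Matrix.det_of_lowerTriangular _ ht]
    simp
  have key : ∀ (c : ℕ) (f : ℕ → ℝ), (∑ k : Fin n, if (k:ℕ) = c then f (k:ℕ) else 0)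
      = if c < n then f c else 0 := by
    intro c f
    split_ifs with h
    · rw [Finset.sum_eq_single (⟨c, h⟩ : Fin n)]
      · simp
      · intro k _ hk
        rw [if_neg]
        intro hkc
        exact hk (Fin.ext hkc)
      · simp
    · apply Finset.sum_eq_zero
      intro k _
      rw [if_neg]
      intro hkc
      exact h (hkc ▸ k.isLt)
  have hfac : (Matrix.of fun i j : Fin n =>
        (gchoose ((i : ℤ) + 1) ((j : ℤ) + 1) : ℝ) * x ^ 2 -
        (gchoose (i : ℤ) ((j : ℤ) - 1) : ℝ))
      = (Matrix.of fun i j : Fin n => (Nat.choose (i : ℕ) (j : ℕ) : ℝ)) * Atri n x := by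
    ext i j
    rw [Matrix.mul_apply]
    simp only [Matrix.of_apply, Atri]
    have hsplit : ∑ k : Fin n, (Nat.choose (i:ℕ) (k:ℕ) : ℝ) *
        ((if (k:ℕ) = (j:ℕ) then x ^ 2 else 0) + (if (k:ℕ) = (j:ℕ) + 1 then x ^ 2 else 0) +
          (if (j:ℕ) = (k:ℕ) + 1 then (-1:ℝ) else 0))
        = (∑ k : Fin n, if (k:ℕ) = (j:ℕ) then (Nat.choose (i:ℕ) (k:ℕ) : ℝ) * x ^ 2 else 0)
        + (∑ k : Fin n, if (k:ℕ) = (j:ℕ)+1 then (Nat.choose (i:ℕ) (k:ℕ) : ℝ) * x ^ 2 else 0)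
        + (∑ k : Fin n, if (k:ℕ) = (j:ℕ)-1 ∧ 1 ≤ (j:ℕ) then -(Nat.choose (i:ℕ) (k:ℕ) : ℝ) else 0) := by
      rw [← Finset.sum_add_distrib, ← Finset.sum_add_distrib]
      apply Finset.sum_congr rfl
      intro k _
      split_ifs <;> first | (exfalso; omega) | ring
    rw [hsplit, key ((j:ℕ)) (fun c => (Nat.choose (i:ℕ) c : ℝ) * x^2), key ((j:ℕ)+1) (fun c => (Nat.choose (i:ℕ) c : ℝ) * x^2)]
    have h3 : (∑ k : Fin n, if (k:ℕ) = (j:ℕ)-1 ∧ 1 ≤ (j:ℕ) then -(Nat.choose (i:ℕ) (k:ℕ) : ℝ) else 0)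
        = if 1 ≤ (j:ℕ) then -(Nat.choose (i:ℕ) ((j:ℕ)-1) : ℝ) else 0 := by
      split_ifs with hj
      · have := key ((j:ℕ)-1) (fun c => -(Nat.choose (i:ℕ) c : ℝ))
        rw [if_pos (by omega : (j:ℕ)-1 < n)] at this
        rw [← this]
        apply Finset.sum_congr rfl
        intro k _
        congr 1
        apply propext
        constructor
        · exact fun h => h.1
        · exact fun h => ⟨h, hj⟩
      · apply Finset.sum_eq_zero
        intro k _
        rw [if_neg (fun h => hj h.2)]
    rw [h3]
    rw [if_pos j.isLt]
    have hij : (i:ℕ) < n := i.isLt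
    have hjn : (j:ℕ) < n := j.isLt
    have hg1 : (gchoose ((i:ℤ)+1) ((j:ℤ)+1) : ℝ)
        = (Nat.choose ((i:ℕ)+1) ((j:ℕ)+1) : ℝ) := by
      have h : gchoose ((i:ℤ)+1) ((j:ℤ)+1) = gchoose (((i:ℕ)+1 : ℕ) : ℤ) (((j:ℕ)+1 : ℕ) : ℤ) := by
        push_cast; ring_nf
      rw [h, gchoose_nat_s9]
      norm_cast
    have hgm : (gchoose (i:ℤ) ((j:ℤ)-1) : ℝ)
        = if 1 ≤ (j:ℕ) then (Nat.choose (i:ℕ) ((j:ℕ)-1) : ℝ) else 0 := by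
      split_ifs with hj
      · have h : gchoose (i:ℤ) ((j:ℤ)-1) = gchoose ((i:ℕ) : ℤ) ((((j:ℕ)-1 : ℕ)) : ℤ) := by
          congr 1
          omega
        rw [h, gchoose_nat_s9]
        norm_cast
      · have hjz : ((j:ℕ) : ℤ) = 0 := by exact_mod_cast (by omega : (j:ℕ) = 0)
        rw [show ((j:ℤ) - 1) = -1 by rw [hjz]; ring, gchoose_neg]
        simp
    rw [hg1, hgm, Nat.choose_succ_succ]
    by_cases h1 : (j:ℕ)+1 < n
    · rw [if_pos h1]
      split_ifs <;> push_cast <;> ring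
    · rw [if_neg h1, Nat.choose_eq_zero_of_lt (show (i:ℕ) < (j:ℕ)+1 by omega)]
      split_ifs <;> push_cast <;> ring
  rw [hfac, Matrix.det_mul, hP, one_mul, Atri_det]
end

section
/- For all n ≥ 0 and 0 ≤ k ≤ n, Σ_{j=0}^{k} qbinom(n, k-j)·qbinom(n-k-1, j)·q^{j²} = Σ_{j=0}^{k} qbinom(n-1, k-j)·qbinom(n-k, j)·q^{j²}. -/
/-- The Gaussian `q`-binomial coefficient with natural upper entry, via the `q`-Pascal rule.
It vanishes when the lower entry exceeds the upper entry. -/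
def qbinom {R : Type*} [CommRing R] (q : R) : ℕ → ℕ → R
  | _, 0 => 1
  | 0, _ + 1 => 0
  | n + 1, k + 1 => qbinom q n k + q ^ (k + 1) * qbinom q n (k + 1)

/-- The Gaussian binomial coefficient with integer upper entry, taken to be `0`
whenever the upper entry is negative (so that `qbinom(a,b) = 0` for `b > a`). -/
def qbinomZ {R : Type*} [CommRing R] (q : R) (a : ℤ) (b : ℕ) : R :=
  if a < 0 then 0 else qbinom q a.toNat b

@[simp] lemma qbinom_zero_right {R : Type*} [CommRing R] (q : R) (n : ℕ) :
    qbinom q n 0 = 1 := by cases n <;> rfl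

lemma qbinom_eq_zero {R : Type*} [CommRing R] (q : R) :
    ∀ n k : ℕ, n < k → qbinom q n k = 0
  | 0, _+1, _ => rfl
  | n+1, k+1, h => by
    rw [qbinom, qbinom_eq_zero q n k (by omega), qbinom_eq_zero q n (k+1) (by omega)]
    ring

lemma qbinom_pascal2 {R : Type*} [CommRing R] (q : R) :
    ∀ n k : ℕ, qbinom q (n+1) (k+1) = q^(n-k) * qbinom q n k + qbinom q n (k+1)
  | 0, 0 => by simp [qbinom]
  | 0, k+1 => by simp [qbinom, qbinom_eq_zero q 0 (k+1) (by omega),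
      qbinom_eq_zero q 0 (k+2) (by omega)]
  | n+1, 0 => by
    conv_lhs => rw [show qbinom q (n+2) 1 = qbinom q (n+1) 0 + q^1 * qbinom q (n+1) 1 from rfl,
      qbinom_pascal2 q n 0]
    conv_rhs => rw [show qbinom q (n+1) 1 = qbinom q n 0 + q^1 * qbinom q n 1 from rfl]
    simp only [qbinom_zero_right, Nat.sub_zero]
    ring
  | n+1, k+1 => by
    conv_lhs => rw [show qbinom q (n+2) (k+2)
        = qbinom q (n+1) (k+1) + q^(k+2) * qbinom q (n+1) (k+2) from rfl,
      qbinom_pascal2 q n k, qbinom_pascal2 q n (k+1)]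
    conv_rhs => rw [show qbinom q (n+1) (k+1)
        = qbinom q n k + q^(k+1) * qbinom q n (k+1) from rfl,
      show qbinom q (n+1) (k+2)
        = qbinom q n (k+1) + q^(k+2) * qbinom q n (k+2) from rfl]
    have h1 : n + 1 - (k+1) = n - k := by omega
    rw [h1]
    rcases lt_or_ge k n with h | h
    · have h2 : q^(n-k) * q^(k+1) = q^(k+2) * q^(n-(k+1)) := by
        rw [← pow_add, ← pow_add]; congr 1; omega
      linear_combination (-(qbinom q n (k+1))) * h2
    · rw [qbinom_eq_zero q n (k+1) (by omega), qbinom_eq_zero q n (k+2) (by omega)]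
      ring

lemma qbinomZ_natCast {R : Type*} [CommRing R] (q : R) (m : ℕ) (b : ℕ) :
    qbinomZ q (m : ℤ) b = qbinom q m b := by
  simp [qbinomZ]

lemma qbinom_key {R : Type*} [CommRing R] (q : R) (s k : ℕ) :
    ∑ j ∈ Finset.range (k+1), qbinom q (k+s+1) (k-j) * qbinom q s j * q^(j^2)
      = ∑ j ∈ Finset.range (k+1), qbinom q (k+s) (k-j) * qbinom q (s+1) j * q^(j^2) := by
  rw [Finset.sum_range_succ, Finset.sum_range_succ']
  have hL : ∀ j ∈ Finset.range k,
      qbinom q (k+s+1) (k-j) * qbinom q s j * q^(j^2)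
      = q^(s+j+1) * qbinom q (k+s) (k-1-j) * qbinom q s j * q^(j^2)
        + qbinom q (k+s) (k-j) * qbinom q s j * q^(j^2) := by
    intro j hj
    simp only [Finset.mem_range] at hj
    have h1 : k - j = (k-1-j) + 1 := by omega
    have h2 : k + s - (k-1-j) = s+j+1 := by omega
    rw [h1, qbinom_pascal2, h2, ← h1]
    ring
  have hR : ∀ j ∈ Finset.range k,
      qbinom q (k+s) (k-(j+1)) * qbinom q (s+1) (j+1) * q^((j+1)^2)
      = q^(s+j+1) * qbinom q (k+s) (k-1-j) * qbinom q s j * q^(j^2)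
        + qbinom q (k+s) (k-1-j) * qbinom q s (j+1) * q^((j+1)^2) := by
    intro j hj
    rw [qbinom_pascal2, show k - (j+1) = k-1-j from by omega]
    rcases le_or_gt j s with h | h
    · have hq : q^(s-j) * q^((j+1)^2) = q^(s+j+1) * q^(j^2) := by
        rw [← pow_add, ← pow_add]; congr 1
        have : (j+1)^2 = j^2 + 2*j + 1 := by ring
        omega
      linear_combination (qbinom q (k+s) (k-1-j) * qbinom q s j) * hq
    · rw [qbinom_eq_zero q s j h]
      ring
  rw [Finset.sum_congr rfl hL, Finset.sum_congr rfl hR, Finset.sum_add_distrib,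
    Finset.sum_add_distrib]
  have e : ∑ j ∈ Finset.range k, qbinom q (k+s) (k-j) * qbinom q s j * q^(j^2)
        + qbinom q (k+s+1) (k-k) * qbinom q s k * q^(k^2)
      = ∑ j ∈ Finset.range k, qbinom q (k+s) (k-1-j) * qbinom q s (j+1) * q^((j+1)^2)
        + qbinom q (k+s) (k-0) * qbinom q (s+1) 0 * q^(0^2) := by
    have t1 := Finset.sum_range_succ
      (fun j => qbinom q (k+s) (k-j) * qbinom q s j * q^(j^2)) k
    have t2 := Finset.sum_range_succ'
      (fun j => qbinom q (k+s) (k-j) * qbinom q s j * q^(j^2)) k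
    simp only [Nat.sub_self, Nat.sub_zero, qbinom_zero_right] at t1 t2 ⊢
    rw [← t1, t2]
    congr 1
    apply Finset.sum_congr rfl
    intro j hj
    rw [show k - (j+1) = k-1-j from by omega]
  linear_combination e

theorem qbinom_convolution_symmetry {R : Type*} [CommRing R] (q : R)
    (n k : ℕ) (hk : k ≤ n) :
    ∑ j ∈ Finset.range (k + 1),
        qbinomZ q (n : ℤ) (k - j) * qbinomZ q ((n : ℤ) - (k : ℤ) - 1) j * q ^ (j ^ 2) =
      ∑ j ∈ Finset.range (k + 1),
        qbinomZ q ((n : ℤ) - 1) (k - j) * qbinomZ q ((n : ℤ) - (k : ℤ)) j * q ^ (j ^ 2) := by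
  rcases eq_or_lt_of_le hk with rfl | hlt
  · refine Eq.trans (Finset.sum_eq_zero ?_) (Finset.sum_eq_zero ?_).symm
    · intro j hj
      have h1 : ((k:ℤ) - k - 1) < 0 := by omega
      simp [qbinomZ, h1]
    · intro j hj
      have h0 : (k:ℤ) - k = 0 := by ring
      rw [h0]
      rcases Nat.eq_zero_or_pos j with rfl | hj0
      · rcases Nat.eq_zero_or_pos k with rfl | hk0
        · simp [qbinomZ]
        · have h2 : ¬ ((k:ℤ) - 1 < 0) := by omega
          have h3 : ((k:ℤ) - 1).toNat = k - 1 := by omega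
          rw [qbinomZ, if_neg h2, h3, qbinom_eq_zero q (k-1) (k-0) (by omega)]
          ring
      · have h4 : qbinomZ q 0 j = 0 := by
          obtain ⟨i, rfl⟩ := Nat.exists_eq_add_of_lt hj0
          simp only [qbinomZ, if_neg (by omega : ¬ (0:ℤ) < 0)]
          rfl
        rw [h4]
        ring
  · obtain ⟨s, rfl⟩ : ∃ s, n = k + s + 1 := ⟨n - k - 1, by omega⟩
    have c1 : ((k+s+1 : ℕ) : ℤ) - k - 1 = ((s : ℕ) : ℤ) := by push_cast; ring
    have c2 : ((k+s+1 : ℕ) : ℤ) - 1 = ((k+s : ℕ) : ℤ) := by push_cast; ring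
    have c3 : ((k+s+1 : ℕ) : ℤ) - k = ((s+1 : ℕ) : ℤ) := by push_cast; ring
    rw [show ((k:ℤ)) = ((k:ℕ):ℤ) from rfl] at *
    calc ∑ j ∈ Finset.range (k + 1),
          qbinomZ q ((k+s+1 : ℕ) : ℤ) (k - j) * qbinomZ q (((k+s+1:ℕ) : ℤ) - (k : ℤ) - 1) j * q ^ (j ^ 2)
        = ∑ j ∈ Finset.range (k+1), qbinom q (k+s+1) (k-j) * qbinom q s j * q^(j^2) := by
          apply Finset.sum_congr rfl
          intro j hj
          rw [c1, qbinomZ_natCast, qbinomZ_natCast]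
      _ = ∑ j ∈ Finset.range (k+1), qbinom q (k+s) (k-j) * qbinom q (s+1) j * q^(j^2) :=
          qbinom_key q s k
      _ = _ := by
          apply Finset.sum_congr rfl
          intro j hj
          rw [c2, c3, qbinomZ_natCast, qbinomZ_natCast]
end
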